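/- Let G be a compact group and G_η ≤ G a closed subgroup of finite index n = [G : G_η]. Suppose there are isometries V_{[g_1]}, …, V_{[g_n]} in a unital C*-algebra F, indexed by the left cosets of G_η, satisfying V_{[g_i]}* V_{[g_j]} = δ_{ij} 1, Σ_i V_{[g_i]} V_{[g_i]}* = 1, and α_g(V_{[g_i]}) = V_{[g g_i]} for a G-action α on F. Let η̃ be an endomorphism of F with ^h η̃ = η̃ for all h ∈ G_η. Then η̂ := Σ_i V_{[g_i]} (^{g_i}η̃)(−) V_{[g_i]}* satisfies ^g η̂ = η̂ for all g ∈ G. -/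

import Mathlib

/-!
Write `^x η := α_x ∘ η ∘ α_{x⁻¹}`. Since `α` is an action, `^g (^{g_q} η̃) = ^{g g_q} η̃`, and
`g g_q = g_{g•q} h` with `h ∈ S`, so `S`-invariance of `η̃` turns this into `^{g_{g•q}} η̃`.
Together with `α_g(V_q) = V_{g•q}`, applying `α_g` to `η̂` just permutes the summands by `q ↦ g • q`.
-/

section Conj

variable {G X : Type*} [Group G]

def conjBy (α : G → X → X) (g : G) (η : X → X) : X → X :=
  fun a => α g (η (α g⁻¹ a))

variable {α : G → X → X} (hα : ∀ g h a, α (g * h) a = α g (α h a))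
include hα

theorem conjBy_mul (g h : G) (η : X → X) (a : X) :
    conjBy α (g * h) η a = α g (conjBy α h η (α g⁻¹ a)) := by
  simp only [conjBy, mul_inv_rev, hα]

theorem conjBy_mul_of_mem {S : Subgroup G} {η : X → X}
    (hη : ∀ h ∈ S, ∀ a, conjBy α h η a = η a) (x : G) {h : G} (hh : h ∈ S) (a : X) :
    conjBy α (x * h) η a = conjBy α x η a := by
  rw [conjBy_mul hα, hη h hh]
  rfl

end Conj

theorem QuotientGroup.inv_mul_mem_of_section {G : Type*} [Group G] {S : Subgroup G}
    {rep : G ⧸ S → G} (hrep : ∀ q : G ⧸ S, (rep q : G ⧸ S) = q) (g : G) (q : G ⧸ S) :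
    (rep (g • q))⁻¹ * (g * rep q) ∈ S := by
  rw [← QuotientGroup.eq, hrep]
  conv_lhs => rw [← hrep q]
  rfl

theorem conjBy_conjBy_rep {G X : Type*} [Group G] {α : G → X → X}
    (hα : ∀ g h a, α (g * h) a = α g (α h a)) {S : Subgroup G} {η : X → X}
    (hη : ∀ h ∈ S, ∀ a, conjBy α h η a = η a)
    {rep : G ⧸ S → G} (hrep : ∀ q : G ⧸ S, (rep q : G ⧸ S) = q) (g : G) (q : G ⧸ S) (a : X) :
    α g (conjBy α (rep q) η (α g⁻¹ a)) = conjBy α (rep (g • q)) η a := by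
  rw [← conjBy_mul hα, ← mul_inv_cancel_left (rep (g • q)) (g * rep q),
    conjBy_mul_of_mem hα hη _ (QuotientGroup.inv_mul_mem_of_section hrep g q)]

theorem induced_endomorphism_G_invariant_general {G F : Type*} [Group G]
    [NormedRing F] [StarRing F] [NormedAlgebra ℂ F]
    (α : G → (F ≃⋆ₐ[ℂ] F)) (hα : ∀ g h a, α (g * h) a = α g (α h a))
    (S : Subgroup G) [Fintype (G ⧸ S)]
    (V : G ⧸ S → F)
    (hVequiv : ∀ (g : G) (q : G ⧸ S), α g (V q) = V (g • q))
    (rep : G ⧸ S → G) (hrep : ∀ q : G ⧸ S, (QuotientGroup.mk (rep q) : G ⧸ S) = q)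
    (ηt : F →⋆ₐ[ℂ] F)
    (hηt : ∀ h ∈ S, ∀ a : F, α h (ηt (α h⁻¹ a)) = ηt a) :
    ∀ (g : G) (a : F),
      α g (∑ q : G ⧸ S, V q * α (rep q) (ηt (α (rep q)⁻¹ (α g⁻¹ a))) * star (V q)) =
        ∑ q : G ⧸ S, V q * α (rep q) (ηt (α (rep q)⁻¹ a)) * star (V q) := by
  intro g a
  rw [map_sum]
  refine Fintype.sum_equiv (MulAction.toPerm g) _ _ fun q => ?_
  rw [map_mul, map_mul, map_star, hVequiv]
  exact congrArg (V (g • q) * · * star (V (g • q)))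
    (conjBy_conjBy_rep (α := fun g => α g) hα hηt hrep g q a)

/-- Let `S ≤ G` be a finite-index subgroup, `V` a family of isometries in a
C*-algebra `F` indexed by the left cosets `G ⧸ S`, with orthogonal ranges summing
to `1`, permuted by the `G`-action: `α_g(V_q) = V_{g•q}`.  If `η̃` is an
endomorphism with `^h η̃ = η̃` for all `h ∈ S`, then
`η̂ = Σ_q V_q (^{g_q} η̃)(−) V_q*` (with `g_q` a representative of `q`) satisfies
`^g η̂ = η̂` for all `g ∈ G`. -/
theorem induced_endomorphism_G_invariant {G F : Type*} [Group G]
    [NormedRing F] [StarRing F] [CStarRing F] [NormedAlgebra ℂ F] [StarModule ℂ F]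
    [CompleteSpace F]
    (α : G → (F ≃⋆ₐ[ℂ] F)) (hα : ∀ g h a, α (g * h) a = α g (α h a))
    (hα1 : ∀ a, α 1 a = a)
    (S : Subgroup G) [Fintype (G ⧸ S)] [DecidableEq (G ⧸ S)]
    (V : G ⧸ S → F)
    (hViso : ∀ q q' : G ⧸ S, star (V q) * V q' = if q = q' then (1 : F) else 0)
    (hVsum : ∑ q : G ⧸ S, V q * star (V q) = (1 : F))
    (hVequiv : ∀ (g : G) (q : G ⧸ S), α g (V q) = V (g • q))
    (rep : G ⧸ S → G) (hrep : ∀ q : G ⧸ S, (QuotientGroup.mk (rep q) : G ⧸ S) = q)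
    (ηt : F →⋆ₐ[ℂ] F)
    (hηt : ∀ h ∈ S, ∀ a : F, α h (ηt (α h⁻¹ a)) = ηt a) :
    ∀ (g : G) (a : F),
      α g (∑ q : G ⧸ S, V q * α (rep q) (ηt (α (rep q)⁻¹ (α g⁻¹ a))) * star (V q)) =
        ∑ q : G ⧸ S, V q * α (rep q) (ηt (α (rep q)⁻¹ a)) * star (V q) :=
  induced_endomorphism_G_invariant_general α hα S V hVequiv rep hrep ηt hηt
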